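/- For the 2×2 matrix L_t = [[1, 2t],[0, -1]] with t > 0, the conformal range DW_BCK^ℝ(L_t) equals the elliptical disk {(x,z) ∈ ℝ² : x²/1 + z²/(t²/(1+t²)) ≤ 1}, i.e. x² + ((1+t²)/t²)z² ≤ 1. -/

import Mathlib

/-!
Write `x = (a, b)`. Every quantity in the definition of the conformal range of `L_t` is a real
linear function of the Gram data `u = |a|²`, `v = |b|²`, `r = Re (conj a * b)`, and these range
exactly over the cone `u, v ≥ 0`, `r² ≤ u v` (Cauchy–Schwarz, and conversely every such triple is
realised). With `D` the denominator and `P`, `Q` the two numerators,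
`t² D² - t² P² - (1 + t²) Q² = 16 t² (1 + t²) (u v - r²)`, so this cone is carried into the
elliptic cone over the ellipse; as `(u, v, r) ↦ (D, P, Q)` is invertible for `t ≠ 0`, it is carried
onto it.
-/

/-- The conformal range (real Davis–Wielandt shell) in the BCK model. -/
noncomputable def DWR (A : Matrix (Fin 2) (Fin 2) ℂ) : Set (ℝ × ℝ) :=
  {p : ℝ × ℝ | ∃ x : EuclideanSpace ℂ (Fin 2), x ≠ 0 ∧
      p = (2 * (inner ℂ x (Matrix.toEuclideanLin A x) : ℂ).re /
            (‖Matrix.toEuclideanLin A x‖ ^ 2 + ‖x‖ ^ 2),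
           (‖Matrix.toEuclideanLin A x‖ ^ 2 - ‖x‖ ^ 2) /
            (‖Matrix.toEuclideanLin A x‖ ^ 2 + ‖x‖ ^ 2))}

open Complex ComplexConjugate Matrix

abbrev Lmatrix (t : ℝ) : Matrix (Fin 2) (Fin 2) ℂ := !![1, 2 * t; 0, -1]

lemma EuclideanSpace.norm_sq_eq_normSq_add_normSq (y : EuclideanSpace ℂ (Fin 2)) :
    ‖y‖ ^ 2 = normSq (y 0) + normSq (y 1) := by
  simp [EuclideanSpace.norm_sq_eq, Fin.sum_univ_two, normSq_eq_norm_sq]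

lemma toEuclideanLin_Lmatrix_apply (t : ℝ) (x : EuclideanSpace ℂ (Fin 2)) :
    toEuclideanLin (Lmatrix t) x = !₂[x 0 + 2 * t * x 1, -x 1] := by
  ext i
  fin_cases i <;> simp [toEuclideanLin, mulVec, dotProduct, Fin.sum_univ_two]

lemma re_inner_toEuclideanLin_Lmatrix (t : ℝ) (x : EuclideanSpace ℂ (Fin 2)) :
    (inner ℂ x (toEuclideanLin (Lmatrix t) x)).re =
      normSq (x 0) - normSq (x 1) + 2 * t * (conj (x 0) * x 1).re := by
  simp [toEuclideanLin_Lmatrix_apply, PiLp.inner_apply, Fin.sum_univ_two, normSq_apply]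
  ring

lemma norm_toEuclideanLin_Lmatrix_sq (t : ℝ) (x : EuclideanSpace ℂ (Fin 2)) :
    ‖toEuclideanLin (Lmatrix t) x‖ ^ 2 =
      normSq (x 0) + 4 * t * (conj (x 0) * x 1).re + (4 * t ^ 2 + 1) * normSq (x 1) := by
  rw [EuclideanSpace.norm_sq_eq_normSq_add_normSq, toEuclideanLin_Lmatrix_apply]
  simp [normSq_apply]
  ring

lemma Complex.exists_normSq_normSq_re_conj_mul {u v r : ℝ} (hu : 0 ≤ u) (hv : 0 ≤ v)
    (hr : r ^ 2 ≤ u * v) : ∃ a b : ℂ, normSq a = u ∧ normSq b = v ∧ (conj a * b).re = r := by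
  rcases hu.eq_or_lt with rfl | hu
  · refine ⟨0, Real.sqrt v, by simp, by simp [Real.mul_self_sqrt hv], ?_⟩
    simpa [eq_comm] using hr
  · have hs : Real.sqrt u ≠ 0 := (Real.sqrt_pos.mpr hu).ne'
    refine ⟨Real.sqrt u, ⟨r / Real.sqrt u, Real.sqrt (u * v - r ^ 2) / Real.sqrt u⟩,
      by simp [Real.mul_self_sqrt hu.le], ?_, by simp [mul_div_cancel₀ _ hs]⟩
    rw [normSq_mk]
    field_simp
    rw [Real.sq_sqrt hu.le, Real.sq_sqrt (by linarith)]
    ring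

lemma Complex.sq_re_conj_mul_le (a b : ℂ) : (conj a * b).re ^ 2 ≤ normSq a * normSq b := by
  simpa [sq] using re_sq_le_normSq (conj a * b)

/-- The point `(P / D, Q / D)` of the conformal range of `Lmatrix t` at a vector with Gram data
`u = |a|²`, `v = |b|²`, `r = Re (conj a * b)`. -/
noncomputable def dwrPoint (t u v r : ℝ) : ℝ × ℝ :=
  (2 * (u - v + 2 * t * r) / (2 * u + 2 * v + 4 * t * r + 4 * t ^ 2 * v),
   (4 * t * r + 4 * t ^ 2 * v) / (2 * u + 2 * v + 4 * t * r + 4 * t ^ 2 * v))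

lemma mem_ellipse_div_iff {t P Q D : ℝ} (ht : t ≠ 0) (hD : D ≠ 0) :
    (P / D) ^ 2 + (1 + t ^ 2) / t ^ 2 * (Q / D) ^ 2 ≤ 1 ↔
      t ^ 2 * P ^ 2 + (1 + t ^ 2) * Q ^ 2 ≤ t ^ 2 * D ^ 2 := by
  have : (P / D) ^ 2 + (1 + t ^ 2) / t ^ 2 * (Q / D) ^ 2 =
      (t ^ 2 * P ^ 2 + (1 + t ^ 2) * Q ^ 2) / (t ^ 2 * D ^ 2) := by
    field_simp
  rw [this, div_le_one (by positivity)]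

lemma dwrPoint_denom_pos {t u v r : ℝ} (hu : 0 ≤ u) (hv : 0 ≤ v) (hr : r ^ 2 ≤ u * v)
    (huv : 0 < u + v) : 0 < 2 * u + 2 * v + 4 * t * r + 4 * t ^ 2 * v := by
  have hsq : (4 * t * r) ^ 2 ≤ (u + 4 * t ^ 2 * v) ^ 2 := by
    nlinarith [sq_nonneg (u - 4 * t ^ 2 * v), mul_le_mul_of_nonneg_left hr (sq_nonneg (4 * t))]
  have := (abs_le_of_sq_le_sq' hsq (by positivity)).1
  linarith

lemma dwrPoint_mem_ellipse {t u v r : ℝ} (ht : t ≠ 0) (hu : 0 ≤ u) (hv : 0 ≤ v)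
    (hr : r ^ 2 ≤ u * v) (huv : 0 < u + v) :
    (dwrPoint t u v r).1 ^ 2 + (1 + t ^ 2) / t ^ 2 * (dwrPoint t u v r).2 ^ 2 ≤ 1 := by
  rw [dwrPoint, mem_ellipse_div_iff ht (dwrPoint_denom_pos hu hv hr huv).ne']
  have key : t ^ 2 * (2 * u + 2 * v + 4 * t * r + 4 * t ^ 2 * v) ^ 2
      - (t ^ 2 * (2 * (u - v + 2 * t * r)) ^ 2 + (1 + t ^ 2) * (4 * t * r + 4 * t ^ 2 * v) ^ 2)
      = 16 * t ^ 2 * (1 + t ^ 2) * (u * v - r ^ 2) := by ring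
  linarith [mul_nonneg (by positivity : (0:ℝ) ≤ 16 * t ^ 2 * (1 + t ^ 2)) (sub_nonneg.mpr hr)]

lemma exists_dwrPoint_eq {t X Z : ℝ} (ht : t ≠ 0)
    (hp : X ^ 2 + (1 + t ^ 2) / t ^ 2 * Z ^ 2 ≤ 1) :
    ∃ u v r : ℝ, 0 ≤ u ∧ 0 ≤ v ∧ r ^ 2 ≤ u * v ∧ 0 < u + v ∧ dwrPoint t u v r = (X, Z) := by
  have hp' : t ^ 2 * X ^ 2 + (1 + t ^ 2) * Z ^ 2 ≤ t ^ 2 := by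
    simpa using (mem_ellipse_div_iff (P := X) (Q := Z) ht one_ne_zero).1 (by simpa using hp)
  have ht2 : 0 < t ^ 2 := by positivity
  have hZ : Z < 1 := by
    have : Z ^ 2 < 1 := by nlinarith [mul_nonneg ht2.le (sq_nonneg X)]
    nlinarith
  -- solve the linear system `dwrPoint t u v r = (X, Z)` with denominator `4 t² (1 + t²)`
  set u := 2 * t ^ 2 * (1 + t ^ 2) * (X - Z) + (1 + 2 * t ^ 2) * t ^ 2 * (1 - X)
  set v := t ^ 2 * (1 - X)
  set r := t * (1 + t ^ 2) * Z - t ^ 3 * (1 - X)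
  have hr : r ^ 2 ≤ u * v := by
    have : u * v - r ^ 2 =
        t ^ 2 * (1 + t ^ 2) * (t ^ 2 - (t ^ 2 * X ^ 2 + (1 + t ^ 2) * Z ^ 2)) := by ring
    linarith [mul_nonneg (by positivity : (0:ℝ) ≤ t ^ 2 * (1 + t ^ 2)) (sub_nonneg.mpr hp')]
  have huv : 0 < u + v := by
    have : u + v = 2 * t ^ 2 * (1 + t ^ 2) * (1 - Z) := by ring
    rw [this]
    exact mul_pos (by positivity) (by linarith)
  obtain ⟨hu, hv⟩ : 0 ≤ u ∧ 0 ≤ v := by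
    rcases mul_nonneg_iff.1 ((sq_nonneg r).trans hr) with h | ⟨hu, hv⟩
    · exact h
    · exact absurd huv (by linarith)
  refine ⟨u, v, r, hu, hv, hr, huv, ?_⟩
  have hden : 2 * u + 2 * v + 4 * t * r + 4 * t ^ 2 * v = 4 * t ^ 2 * (1 + t ^ 2) := by ring
  rw [dwrPoint, hden, Prod.mk.injEq]
  constructor <;> field_simp <;> ring

lemma dwrPoint_eq (t : ℝ) (x : EuclideanSpace ℂ (Fin 2)) :
    dwrPoint t (normSq (x 0)) (normSq (x 1)) (conj (x 0) * x 1).re =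
      (2 * (inner ℂ x (toEuclideanLin (Lmatrix t) x)).re /
          (‖toEuclideanLin (Lmatrix t) x‖ ^ 2 + ‖x‖ ^ 2),
        (‖toEuclideanLin (Lmatrix t) x‖ ^ 2 - ‖x‖ ^ 2) /
          (‖toEuclideanLin (Lmatrix t) x‖ ^ 2 + ‖x‖ ^ 2)) := by
  rw [re_inner_toEuclideanLin_Lmatrix, norm_toEuclideanLin_Lmatrix_sq,
    EuclideanSpace.norm_sq_eq_normSq_add_normSq, dwrPoint, Prod.mk.injEq]
  constructor <;> ring

lemma DWR_Lmatrix_eq (t : ℝ) :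
    DWR (Lmatrix t) = {p | ∃ u v r : ℝ, 0 ≤ u ∧ 0 ≤ v ∧ r ^ 2 ≤ u * v ∧ 0 < u + v ∧
      dwrPoint t u v r = p} := by
  ext p
  constructor
  · rintro ⟨x, hx, rfl⟩
    refine ⟨_, _, _, normSq_nonneg _, normSq_nonneg _, sq_re_conj_mul_le _ _, ?_, dwrPoint_eq t x⟩
    rw [← EuclideanSpace.norm_sq_eq_normSq_add_normSq]
    positivity
  · rintro ⟨u, v, r, hu, hv, hr, huv, rfl⟩
    obtain ⟨a, b, rfl, rfl, rfl⟩ := exists_normSq_normSq_re_conj_mul hu hv hr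
    refine ⟨!₂[a, b], ?_, dwrPoint_eq t !₂[a, b]⟩
    intro h
    rw [← norm_eq_zero, ← sq_eq_zero_iff, EuclideanSpace.norm_sq_eq_normSq_add_normSq] at h
    exact huv.ne' (by simpa using h)

theorem DWR_Lt (t : ℝ) (ht : 0 < t) :
    DWR !![(1 : ℂ), 2 * t; 0, -1] =
      {p : ℝ × ℝ | p.1 ^ 2 + ((1 + t ^ 2) / t ^ 2) * p.2 ^ 2 ≤ 1} := by
  change DWR (Lmatrix t) = _
  rw [DWR_Lmatrix_eq]
  ext ⟨X, Z⟩
  constructor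
  · rintro ⟨u, v, r, hu, hv, hr, huv, hp⟩
    exact hp ▸ dwrPoint_mem_ellipse ht.ne' hu hv hr huv
  · exact exists_dwrPoint_eq ht.ne'
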